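/- There exists a constant c > 1 such that for all ε ∈ (0, 1/2), with L(ε) = ⌈log₂(ε^{-2}) + log₂(log₂(ε^{-2}))⌉, N_ℓ(ε) = ⌈(L(ε)+1) · 2^{-ℓ} · max(ℓ,1) · ε^{-2}⌉, and n_ℓ(ε) = ⌈N_ℓ(ε)^{1/2}⌉, one has c^{-1} · ε^{-2} · (ln(ε^{-1}))^{3/2} ≤ ∑_{ℓ=0}^{L(ε)} n_ℓ(ε) · 2^ℓ ≤ c · ε^{-2} · (ln(ε^{-1}))^{3/2}. -/

import Mathlib

/-!
Write `x = ε⁻¹` and `a = log₂ x²`, so that `a ≍ ln x`. The level `L = ⌈a + log₂ a⌉` satisfies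
`a ≤ L ≤ 3a - 1` and `x² a ≤ 2^L ≤ 2 x² a`. Up to the rounding error `2 · 2^ℓ`, the term
`n_ℓ 2^ℓ` is at most `(L + 1) x √2^ℓ`, which grows geometrically in `ℓ`, so the sum is comparable
to its last term `√((L + 1) L) x √2^L ≍ x² a^{3/2}`.
-/

/-- Maximal level `L(ε) = ⌈log₂(ε⁻²) + log₂(log₂(ε⁻²))⌉`. -/
noncomputable def Lfun (ε : ℝ) : ℕ :=
  ⌈Real.logb 2 (ε⁻¹ ^ 2) + Real.logb 2 (Real.logb 2 (ε⁻¹ ^ 2))⌉₊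

/-- Replication numbers `N_ℓ(ε) = ⌈(L(ε)+1) · 2^{-ℓ} · max(ℓ,1) · ε⁻²⌉`. -/
noncomputable def Nfun (ε : ℝ) (ℓ : ℕ) : ℕ :=
  ⌈((Lfun ε : ℝ) + 1) * (2 : ℝ)⁻¹ ^ ℓ * (max ℓ 1 : ℕ) * ε⁻¹ ^ 2⌉₊

/-- Square-root replication numbers `n_ℓ(ε) = ⌈N_ℓ(ε)^{1/2}⌉`. -/
noncomputable def nfun (ε : ℝ) (ℓ : ℕ) : ℕ := ⌈Real.sqrt (Nfun ε ℓ)⌉₊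

open Real Finset

lemma rpow_three_halves {x : ℝ} (hx : 0 ≤ x) : x ^ (3 / 2 : ℝ) = x * √x := by
  rw [sqrt_eq_rpow, show (3 / 2 : ℝ) = 1 + 1 / 2 by norm_num, rpow_add' hx (by norm_num),
    rpow_one]

lemma sqrt_add_one_le {t : ℝ} (ht : 0 ≤ t) : √(t + 1) ≤ √t + 1 := by
  rw [sqrt_le_left (by positivity), add_sq, sq_sqrt ht]
  nlinarith [sqrt_nonneg t]

lemma sqrt_le_ceil_sqrt_ceil (t : ℝ) : √t ≤ ⌈√(⌈t⌉₊ : ℝ)⌉₊ :=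
  (sqrt_le_sqrt (Nat.le_ceil t)).trans (Nat.le_ceil _)

lemma ceil_sqrt_ceil_le {t : ℝ} (ht : 0 ≤ t) : (⌈√(⌈t⌉₊ : ℝ)⌉₊ : ℝ) ≤ √t + 2 :=
  calc (⌈√(⌈t⌉₊ : ℝ)⌉₊ : ℝ) ≤ √(⌈t⌉₊ : ℝ) + 1 := (Nat.ceil_lt_add_one (sqrt_nonneg _)).le
    _ ≤ √(t + 1) + 1 := by gcongr; exact (Nat.ceil_lt_add_one ht).le
    _ ≤ √t + 2 := by linarith [sqrt_add_one_le ht]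

lemma geom_sum_range_succ_le {r : ℝ} (hr : 1 < r) (n : ℕ) :
    ∑ i ∈ range (n + 1), r ^ i ≤ r / (r - 1) * r ^ n := by
  have hr' : 0 < r - 1 := by linarith
  rw [geom_sum_eq hr.ne', div_mul_eq_mul_div, pow_succ']
  gcongr
  linarith

section Level

variable {a : ℝ}

lemma le_ceil_add_logb (ha : 1 ≤ a) : a ≤ ⌈a + logb 2 a⌉₊ :=
  (le_add_of_nonneg_right (logb_nonneg one_lt_two ha)).trans (Nat.le_ceil _)

lemma ceil_add_logb_add_one_le (ha : 1 ≤ a) : (⌈a + logb 2 a⌉₊ : ℝ) + 1 ≤ 3 * a := by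
  have hlog2 : 1 / 2 < log 2 := by linarith [log_two_gt_d9]
  have hb : logb 2 a ≤ 2 * (a - 1) := by
    rw [logb, div_le_iff₀ (by linarith)]
    nlinarith [log_le_sub_one_of_pos (show 0 < a by linarith)]
  have hceil := Nat.ceil_lt_add_one (show 0 ≤ a + logb 2 a by
    linarith [logb_nonneg one_lt_two ha])
  linarith

lemma rpow_mul_le_two_pow_ceil_add_logb (ha : 0 < a) :
    (2 : ℝ) ^ a * a ≤ 2 ^ ⌈a + logb 2 a⌉₊ :=
  calc (2 : ℝ) ^ a * a = 2 ^ (a + logb 2 a) := by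
        rw [rpow_add two_pos, rpow_logb two_pos (by norm_num) ha]
    _ ≤ 2 ^ (⌈a + logb 2 a⌉₊ : ℝ) := rpow_le_rpow_of_exponent_le one_le_two (Nat.le_ceil _)
    _ = 2 ^ ⌈a + logb 2 a⌉₊ := rpow_natCast _ _

lemma two_pow_ceil_add_logb_le (ha : 1 ≤ a) :
    (2 : ℝ) ^ ⌈a + logb 2 a⌉₊ ≤ 2 * (2 ^ a * a) :=
  calc (2 : ℝ) ^ ⌈a + logb 2 a⌉₊ = 2 ^ (⌈a + logb 2 a⌉₊ : ℝ) := (rpow_natCast _ _).symm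
    _ ≤ 2 ^ (a + logb 2 a + 1) := by
        refine rpow_le_rpow_of_exponent_le one_le_two (Nat.ceil_lt_add_one ?_).le
        linarith [logb_nonneg one_lt_two ha]
    _ = 2 * (2 ^ a * a) := by
        rw [rpow_add two_pos, rpow_add two_pos, rpow_logb two_pos (by norm_num) (by linarith),
          rpow_one]
        ring

end Level

lemma log_le_logb_two_sq {x : ℝ} (hx : 1 ≤ x) : log x ≤ logb 2 (x ^ 2) := by
  rw [logb_pow, logb, mul_div_assoc', le_div_iff₀ (log_pos one_lt_two)]
  push_cast
  nlinarith [log_nonneg hx, log_two_lt_d9]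

lemma logb_two_sq_le {x : ℝ} (hx : 1 ≤ x) : logb 2 (x ^ 2) ≤ 3 * log x := by
  rw [logb_pow, logb, mul_div_assoc', div_le_iff₀ (log_pos one_lt_two)]
  push_cast
  nlinarith [log_nonneg hx, log_two_gt_d9]

lemma logb_two_sq_rpow_le {x : ℝ} (hx : 1 ≤ x) :
    logb 2 (x ^ 2) ^ (3 / 2 : ℝ) ≤ 9 * log x ^ (3 / 2 : ℝ) :=
  calc logb 2 (x ^ 2) ^ (3 / 2 : ℝ) ≤ (3 * log x) ^ (3 / 2 : ℝ) :=
        rpow_le_rpow (by linarith [log_le_logb_two_sq hx, log_nonneg hx]) (logb_two_sq_le hx)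
          (by norm_num)
    _ = 3 ^ (3 / 2 : ℝ) * log x ^ (3 / 2 : ℝ) := mul_rpow (by norm_num) (log_nonneg hx)
    _ ≤ 3 ^ (2 : ℝ) * log x ^ (3 / 2 : ℝ) :=
        mul_le_mul_of_nonneg_right (rpow_le_rpow_of_exponent_le (by norm_num) (by norm_num))
          (rpow_nonneg (log_nonneg hx) _)
    _ = 9 * log x ^ (3 / 2 : ℝ) := by norm_num

section Replication

variable {ε : ℝ}

lemma nfun_mul_two_pow_le (hε : 0 < ε) {ℓ : ℕ} (hℓ : ℓ ≤ Lfun ε) :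
    (nfun ε ℓ : ℝ) * 2 ^ ℓ ≤ ((Lfun ε : ℝ) + 1) * ε⁻¹ * √2 ^ ℓ + 2 * 2 ^ ℓ := by
  have hs : √2 ^ 2 = 2 := sq_sqrt zero_le_two
  have hmax : ((max ℓ 1 : ℕ) : ℝ) ≤ Lfun ε + 1 := by
    exact_mod_cast (show max ℓ 1 ≤ Lfun ε + 1 by omega)
  have hsqrt : √(((Lfun ε : ℝ) + 1) * (2 : ℝ)⁻¹ ^ ℓ * (max ℓ 1 : ℕ) * ε⁻¹ ^ 2)
      ≤ ((Lfun ε : ℝ) + 1) * ε⁻¹ * (√2)⁻¹ ^ ℓ := by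
    have hinv : ((√2)⁻¹ ^ ℓ) ^ 2 = (2 : ℝ)⁻¹ ^ ℓ := by
      rw [← pow_mul, mul_comm, pow_mul, inv_pow, hs]
    rw [sqrt_le_left (by positivity), mul_pow, mul_pow, hinv]
    have : (0 : ℝ) ≤ ((Lfun ε : ℝ) + 1) * (2 : ℝ)⁻¹ ^ ℓ * ε⁻¹ ^ 2 := by positivity
    nlinarith [mul_le_mul_of_nonneg_left hmax this]
  have hn : (nfun ε ℓ : ℝ) ≤ ((Lfun ε : ℝ) + 1) * ε⁻¹ * (√2)⁻¹ ^ ℓ + 2 :=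
    (ceil_sqrt_ceil_le (by positivity)).trans (by linarith)
  calc (nfun ε ℓ : ℝ) * 2 ^ ℓ ≤ (((Lfun ε : ℝ) + 1) * ε⁻¹ * (√2)⁻¹ ^ ℓ + 2) * 2 ^ ℓ := by
        gcongr
    _ = ((Lfun ε : ℝ) + 1) * ε⁻¹ * √2 ^ ℓ + 2 * 2 ^ ℓ := by
        have hcancel : (√2)⁻¹ ^ ℓ * 2 ^ ℓ = √2 ^ ℓ := by
          rw [← mul_pow, inv_mul_eq_div, div_sqrt]
        linear_combination ((Lfun ε : ℝ) + 1) * ε⁻¹ * hcancel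

lemma sqrt_le_nfun_Lfun_mul_two_pow (hL : 1 ≤ Lfun ε) :
    √(((Lfun ε : ℝ) + 1) * Lfun ε * ε⁻¹ ^ 2 * 2 ^ Lfun ε) ≤ nfun ε (Lfun ε) * 2 ^ Lfun ε := by
  have hmax : ((max (Lfun ε) 1 : ℕ) : ℝ) = Lfun ε := by rw [max_eq_left hL]
  have hcancel : (2 : ℝ)⁻¹ ^ Lfun ε * 2 ^ Lfun ε = 1 := by rw [← mul_pow]; norm_num
  calc √(((Lfun ε : ℝ) + 1) * Lfun ε * ε⁻¹ ^ 2 * 2 ^ Lfun ε)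
        = √(((Lfun ε : ℝ) + 1) * (2 : ℝ)⁻¹ ^ Lfun ε * (max (Lfun ε) 1 : ℕ) * ε⁻¹ ^ 2
          * (2 ^ Lfun ε) ^ 2) := by
        rw [hmax]
        congr 1
        linear_combination -(((Lfun ε : ℝ) + 1) * Lfun ε * ε⁻¹ ^ 2 * 2 ^ Lfun ε) * hcancel
    _ = √(((Lfun ε : ℝ) + 1) * (2 : ℝ)⁻¹ ^ Lfun ε * (max (Lfun ε) 1 : ℕ) * ε⁻¹ ^ 2)
          * 2 ^ Lfun ε := by
        rw [sqrt_mul (by positivity), sqrt_sq (by positivity)]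
    _ ≤ nfun ε (Lfun ε) * 2 ^ Lfun ε := by
        gcongr
        exact sqrt_le_ceil_sqrt_ceil _

end Replication

section Cost

variable {ε : ℝ}

lemma mul_rpow_le_sum_nfun_mul_two_pow (hε : 0 < ε) (ha : 1 ≤ logb 2 (ε⁻¹ ^ 2)) :
    ε⁻¹ ^ 2 * logb 2 (ε⁻¹ ^ 2) ^ (3 / 2 : ℝ) ≤
      ∑ ℓ ∈ range (Lfun ε + 1), (nfun ε ℓ : ℝ) * 2 ^ ℓ := by
  set a := logb 2 (ε⁻¹ ^ 2)
  have haL : a ≤ Lfun ε := le_ceil_add_logb ha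
  have h2L : ε⁻¹ ^ 2 * a ≤ 2 ^ Lfun ε := by
    have h := rpow_mul_le_two_pow_ceil_add_logb (a := a) (by linarith)
    rwa [rpow_logb two_pos (by norm_num) (by positivity)] at h
  have hL : 1 ≤ Lfun ε := by exact_mod_cast ha.trans haL
  calc ε⁻¹ ^ 2 * a ^ (3 / 2 : ℝ) = √(a * a * ε⁻¹ ^ 2 * (ε⁻¹ ^ 2 * a)) := by
        rw [rpow_three_halves (by linarith), show a * a * ε⁻¹ ^ 2 * (ε⁻¹ ^ 2 * a)
          = (ε⁻¹ ^ 2 * a) ^ 2 * a by ring, sqrt_mul (sq_nonneg _), sqrt_sq (by positivity)]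
        ring
    _ ≤ √(((Lfun ε : ℝ) + 1) * Lfun ε * ε⁻¹ ^ 2 * 2 ^ Lfun ε) := by gcongr; linarith
    _ ≤ nfun ε (Lfun ε) * 2 ^ Lfun ε := sqrt_le_nfun_Lfun_mul_two_pow hL
    _ ≤ ∑ ℓ ∈ range (Lfun ε + 1), (nfun ε ℓ : ℝ) * 2 ^ ℓ :=
        single_le_sum (f := fun ℓ => (nfun ε ℓ : ℝ) * 2 ^ ℓ) (fun _ _ => by positivity)
          (self_mem_range_succ _)

lemma sum_nfun_mul_two_pow_le (hε : 0 < ε) (ha : 1 ≤ logb 2 (ε⁻¹ ^ 2)) :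
    ∑ ℓ ∈ range (Lfun ε + 1), (nfun ε ℓ : ℝ) * 2 ^ ℓ ≤
      26 * (ε⁻¹ ^ 2 * logb 2 (ε⁻¹ ^ 2) ^ (3 / 2 : ℝ)) := by
  set a := logb 2 (ε⁻¹ ^ 2)
  have hL : (Lfun ε : ℝ) + 1 ≤ 3 * a := ceil_add_logb_add_one_le ha
  have h2L : (2 : ℝ) ^ Lfun ε ≤ 2 * (ε⁻¹ ^ 2 * a) := by
    have h := two_pow_ceil_add_logb_le ha
    rwa [rpow_logb two_pos (by norm_num) (by positivity)] at h
  have hs2L : √2 ^ Lfun ε ≤ √2 * (ε⁻¹ * √a) := by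
    refine (pow_le_pow_iff_left₀ (by positivity) (by positivity) two_ne_zero).mp ?_
    rw [← pow_mul, mul_comm, pow_mul, mul_pow, mul_pow, sq_sqrt zero_le_two,
      sq_sqrt (by linarith)]
    linarith
  have hs_lb : (1.4 : ℝ) ≤ √2 := (le_sqrt (by norm_num) zero_le_two).mpr (by norm_num)
  have hs_ub : √2 ≤ 1.5 := (sqrt_le_left (by norm_num)).mpr (by norm_num)
  have hgeom : √2 / (√2 - 1) ≤ 4 := by
    rw [div_le_iff₀ (by linarith)]
    linarith
  have hsa : 1 ≤ √a := one_le_sqrt.mpr ha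
  calc ∑ ℓ ∈ range (Lfun ε + 1), (nfun ε ℓ : ℝ) * 2 ^ ℓ
        ≤ ∑ ℓ ∈ range (Lfun ε + 1), (((Lfun ε : ℝ) + 1) * ε⁻¹ * √2 ^ ℓ + 2 * 2 ^ ℓ) :=
        sum_le_sum fun ℓ hℓ => nfun_mul_two_pow_le hε (Nat.lt_succ_iff.mp (mem_range.mp hℓ))
    _ = ((Lfun ε : ℝ) + 1) * ε⁻¹ * ∑ ℓ ∈ range (Lfun ε + 1), √2 ^ ℓ
          + 2 * ∑ ℓ ∈ range (Lfun ε + 1), (2 : ℝ) ^ ℓ := by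
        rw [sum_add_distrib, mul_sum, mul_sum]
    _ ≤ (3 * a) * ε⁻¹ * (4 * (√2 * (ε⁻¹ * √a))) + 2 * (2 * (2 * (ε⁻¹ ^ 2 * a))) := by
        gcongr
        · exact (geom_sum_range_succ_le (by linarith) _).trans (by gcongr)
        · refine (geom_sum_range_succ_le one_lt_two _).trans ?_
          rw [show (2 : ℝ) / (2 - 1) = 2 by norm_num]
          linarith
    _ ≤ 26 * (ε⁻¹ ^ 2 * a ^ (3 / 2 : ℝ)) := by
        rw [rpow_three_halves (by linarith)]
        have hpos : 0 ≤ ε⁻¹ ^ 2 * a := by positivity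
        nlinarith [mul_le_mul_of_nonneg_left hs_ub (mul_nonneg hpos (sqrt_nonneg a)),
          mul_le_mul_of_nonneg_left hsa hpos]

end Cost

/-- Bit-cost estimate for the random bit multilevel Euler algorithm based on Bakhvalov's
trick: `∑_{ℓ=0}^{L(ε)} n_ℓ(ε)·2^ℓ ≍ ε⁻²·(ln ε⁻¹)^{3/2}`. -/
theorem stmt_9 :
    ∃ c : ℝ, 1 < c ∧ ∀ ε : ℝ, ε ∈ Set.Ioo (0 : ℝ) (1 / 2) →
      c⁻¹ * ε⁻¹ ^ 2 * Real.log ε⁻¹ ^ ((3 : ℝ) / 2) ≤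
          ∑ ℓ ∈ Finset.range (Lfun ε + 1), (nfun ε ℓ : ℝ) * 2 ^ ℓ ∧
        ∑ ℓ ∈ Finset.range (Lfun ε + 1), (nfun ε ℓ : ℝ) * 2 ^ ℓ ≤
          c * ε⁻¹ ^ 2 * Real.log ε⁻¹ ^ ((3 : ℝ) / 2) := by
  refine ⟨234, by norm_num, fun ε ⟨hε, hε2⟩ => ?_⟩
  have hx : 2 < ε⁻¹ := by rw [lt_inv_comm₀ two_pos hε]; linarith
  have hx1 : 1 ≤ ε⁻¹ := by linarith
  have hy : 0 ≤ log ε⁻¹ := log_nonneg hx1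
  have ha : 1 ≤ logb 2 (ε⁻¹ ^ 2) := by
    rw [le_logb_iff_rpow_le one_lt_two (by positivity), rpow_one]
    nlinarith
  have hlog_le : log ε⁻¹ ^ (3 / 2 : ℝ) ≤ logb 2 (ε⁻¹ ^ 2) ^ (3 / 2 : ℝ) :=
    rpow_le_rpow hy (log_le_logb_two_sq hx1) (by norm_num)
  constructor
  · calc 234⁻¹ * ε⁻¹ ^ 2 * log ε⁻¹ ^ (3 / 2 : ℝ)
          ≤ ε⁻¹ ^ 2 * logb 2 (ε⁻¹ ^ 2) ^ (3 / 2 : ℝ) := by nlinarith [rpow_nonneg hy (3 / 2 : ℝ)]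
      _ ≤ _ := mul_rpow_le_sum_nfun_mul_two_pow hε ha
  · calc _ ≤ 26 * (ε⁻¹ ^ 2 * logb 2 (ε⁻¹ ^ 2) ^ (3 / 2 : ℝ)) :=
          sum_nfun_mul_two_pow_le hε ha
      _ ≤ 234 * ε⁻¹ ^ 2 * log ε⁻¹ ^ (3 / 2 : ℝ) := by nlinarith [logb_two_sq_rpow_le hx1]
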